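/- Suppose R_min ≥ 30√d and a ≤ R_min/2 − √d·max{4√(2[log(R_min/4)]₊), 8√3}. Then for any μ with μ_i ∈ B(μ_i*, a) for all i and any i ≠ j, E[w_i(X;μ) w_j(X;μ) ‖X − μ_i‖₂ ‖X − μ_j‖₂] ≤ ((2−κ)/κ)·((3/2)R_max + d)² · exp(−(R_min/2 − a)·√d/8), where X is drawn from the true mixture and κ = min_k π_k. -/

import Mathlib

/-!
Around each true center `μstar k`, split space at radius `D / 2`, where `D = Rmin / 2 - a`.
Inside that ball one of the two distinct components `i`, `j` has its candidate center at
distance at least `Rmin - a - ‖x - μstar k‖`, while component `k` is within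
`‖x - μstar k‖ + a`; comparing the two Gaussian weights makes `w_i w_j` at most
`κ⁻¹ exp (-Rmin D / 2)`. Outside the ball the Gaussian factor `exp (-‖x - μstar k‖² / 2)` is
itself at most `exp (-D² / 16) exp (-‖x - μstar k‖² / 4)`. In both regions
`‖x - μ_i‖ ‖x - μ_j‖ ≤ (‖x - μstar k‖ + 3 Rmax / 2)²`, so it remains to integrate
`(‖z‖ + c)² exp (-b ‖z‖²)`, which only needs the second moment
`∫ ‖z‖² exp (-b ‖z‖²) = dim / (2 b) · ∫ exp (-b ‖z‖²)`: in polar coordinates both sides are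
Gamma values at arguments differing by one. Finally `D ≥ 8 √d` gives
`4 · 2 ^ (d / 2) · exp (-D² / 16) ≤ exp (-D √d / 8)`, and two distinct weights of size at least
`κ` force `κ ≤ 1 / 2`, so that `κ⁻¹ + 1 ≤ (2 - κ) / κ`.
-/

open MeasureTheory

/-- Gaussian-mixture posterior responsibility of component `i` at point `x`,
under candidate centers `μ` and mixing weights `pr`. -/
noncomputable def respW (d M : ℕ) (pr : Fin M → ℝ)
    (μ : Fin M → EuclideanSpace ℝ (Fin d)) (i : Fin M)
    (x : EuclideanSpace ℝ (Fin d)) : ℝ :=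
  pr i * Real.exp (-‖x - μ i‖ ^ 2 / 2) / ∑ k, pr k * Real.exp (-‖x - μ k‖ ^ 2 / 2)

/-- Standard Gaussian density on `ℝ^d`. -/
noncomputable def stdGaussDensity (d : ℕ) (x : EuclideanSpace ℝ (Fin d)) : ℝ :=
  (2 * Real.pi) ^ (-(d : ℝ) / 2) * Real.exp (-‖x‖ ^ 2 / 2)

/-- Density of the Gaussian mixture `∑ i, pr i · N(μ i, I_d)` on `ℝ^d`. -/
noncomputable def mixDensity (d M : ℕ) (pr : Fin M → ℝ)
    (μ : Fin M → EuclideanSpace ℝ (Fin d)) (x : EuclideanSpace ℝ (Fin d)) : ℝ :=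
  ∑ i, pr i * stdGaussDensity d (x - μ i)

open Real Set Module

theorem integral_Ioi_rpow_add_two_mul_exp_neg_mul_sq {q b : ℝ} (hq : -1 < q) (hb : 0 < b) :
    ∫ y in Ioi (0 : ℝ), y ^ (q + 2) * exp (-b * y ^ 2) =
      (q + 1) / (2 * b) * ∫ y in Ioi (0 : ℝ), y ^ q * exp (-b * y ^ 2) := by
  have h := fun q (hq : -1 < q) => integral_rpow_mul_exp_neg_mul_rpow (p := 2) two_pos hq hb
  simp only [rpow_two] at h
  rw [h _ (by linarith), h _ hq, show (q + 2 + 1) / 2 = (q + 1) / 2 + 1 by ring,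
    Gamma_add_one (by linarith), show -(q + 2 + 1) / 2 = -(q + 1) / 2 + -1 by ring,
    rpow_add hb, rpow_neg_one]
  field_simp

section GaussianMoments

variable {E : Type*} [NormedAddCommGroup E] [NormedSpace ℝ E] [FiniteDimensional ℝ E]
  [MeasurableSpace E] [BorelSpace E] [Nontrivial E] (μ : Measure E) [μ.IsAddHaarMeasure]

theorem integrable_norm_pow_mul_exp_neg_mul_sq_norm (n : ℕ) {b : ℝ} (hb : 0 < b) :
    Integrable (fun x : E => ‖x‖ ^ n * exp (-b * ‖x‖ ^ 2)) μ := by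
  rw [integrable_fun_norm_addHaar μ (f := fun y => y ^ n * exp (-b * y ^ 2))]
  have hs : (-1 : ℝ) < ((finrank ℝ E - 1 + n : ℕ) : ℝ) := by
    linarith [(finrank ℝ E - 1 + n).cast_nonneg (α := ℝ)]
  refine (integrableOn_rpow_mul_exp_neg_mul_sq hb hs).congr_fun (fun y _ => ?_) measurableSet_Ioi
  simp only [rpow_natCast, smul_eq_mul, pow_add]
  ring

theorem integral_norm_sq_mul_exp_neg_mul_sq_norm {b : ℝ} (hb : 0 < b) :
    ∫ x, ‖x‖ ^ 2 * exp (-b * ‖x‖ ^ 2) ∂μ =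
      finrank ℝ E / (2 * b) * ∫ x, exp (-b * ‖x‖ ^ 2) ∂μ := by
  rw [integral_fun_norm_addHaar μ (fun y => y ^ 2 * exp (-b * y ^ 2)),
    integral_fun_norm_addHaar μ (fun y => exp (-b * y ^ 2))]
  set n := finrank ℝ E - 1
  have hn : (n : ℝ) + 1 = finrank ℝ E := by
    rw [Nat.cast_sub finrank_pos, Nat.cast_one, sub_add_cancel]
  have h := integral_Ioi_rpow_add_two_mul_exp_neg_mul_sq (q := n)
    (by linarith [n.cast_nonneg (α := ℝ)]) hb
  rw [hn, show (n : ℝ) + 2 = ((n + 2 : ℕ) : ℝ) by push_cast; ring] at h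
  simp only [rpow_natCast] at h
  simp only [smul_eq_mul, ← mul_assoc, ← pow_add, nsmul_eq_mul, h]
  ring

theorem integrable_add_norm_sq_mul_exp_neg_mul_sq_norm (c : ℝ) {b : ℝ} (hb : 0 < b) :
    Integrable (fun x : E => (‖x‖ + c) ^ 2 * exp (-b * ‖x‖ ^ 2)) μ := by
  have h (n : ℕ) := integrable_norm_pow_mul_exp_neg_mul_sq_norm μ n hb
  refine (((h 2).add ((h 1).const_mul (2 * c))).add ((h 0).const_mul (c ^ 2))).congr ?_
  exact .of_forall fun x => by simp only [Pi.add_apply]; ring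

theorem integral_add_norm_sq_mul_exp_neg_mul_sq_norm_le {b c : ℝ} (hb : 0 < b) (hc : 0 ≤ c)
    (hbE : 2 * b ≤ finrank ℝ E) :
    ∫ x, (‖x‖ + c) ^ 2 * exp (-b * ‖x‖ ^ 2) ∂μ ≤
      (c + finrank ℝ E / (2 * b)) ^ 2 * ∫ x, exp (-b * ‖x‖ ^ 2) ∂μ := by
  set β : ℝ := finrank ℝ E / (2 * b)
  have hβ : 1 ≤ β := (one_le_div (by positivity)).2 hbE
  have hI : Integrable (fun x : E => exp (-b * ‖x‖ ^ 2)) μ := by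
    simpa using integrable_norm_pow_mul_exp_neg_mul_sq_norm μ 0 hb
  have hI2 := integrable_norm_pow_mul_exp_neg_mul_sq_norm μ 2 hb
  have hI0 : 0 ≤ ∫ x, exp (-b * ‖x‖ ^ 2) ∂μ := integral_nonneg fun _ => (exp_pos _).le
  -- from `2 c r ≤ c (r ^ 2 + 1)`
  have hpt (x : E) : (‖x‖ + c) ^ 2 * exp (-b * ‖x‖ ^ 2) ≤
      (1 + c) * (‖x‖ ^ 2 * exp (-b * ‖x‖ ^ 2)) + (c + c ^ 2) * exp (-b * ‖x‖ ^ 2) := by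
    nlinarith [mul_nonneg hc (sq_nonneg (‖x‖ - 1)), exp_pos (-b * ‖x‖ ^ 2)]
  calc ∫ x, (‖x‖ + c) ^ 2 * exp (-b * ‖x‖ ^ 2) ∂μ
      ≤ ∫ x, (1 + c) * (‖x‖ ^ 2 * exp (-b * ‖x‖ ^ 2)) + (c + c ^ 2) * exp (-b * ‖x‖ ^ 2) ∂μ :=
        integral_mono_of_nonneg (.of_forall fun _ => by positivity)
          ((hI2.const_mul _).add (hI.const_mul _)) (.of_forall hpt)
    _ = ((1 + c) * β + c + c ^ 2) * ∫ x, exp (-b * ‖x‖ ^ 2) ∂μ := by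
        rw [integral_add (hI2.const_mul _) (hI.const_mul _), integral_const_mul,
          integral_const_mul, integral_norm_sq_mul_exp_neg_mul_sq_norm μ hb]
        ring
    _ ≤ (c + β) ^ 2 * ∫ x, exp (-b * ‖x‖ ^ 2) ∂μ := by
        gcongr
        nlinarith

end GaussianMoments

section Responsibilities

variable {d M : ℕ} {pr : Fin M → ℝ} {μ : Fin M → EuclideanSpace ℝ (Fin d)}

theorem respW_nonneg (hpr : ∀ k, 0 ≤ pr k) (l : Fin M) (x : EuclideanSpace ℝ (Fin d)) :
    0 ≤ respW d M pr μ l x :=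
  div_nonneg (mul_nonneg (hpr l) (exp_pos _).le)
    (Finset.sum_nonneg fun k _ => mul_nonneg (hpr k) (exp_pos _).le)

theorem respW_le_one (hpr : ∀ k, 0 ≤ pr k) (l : Fin M) (x : EuclideanSpace ℝ (Fin d)) :
    respW d M pr μ l x ≤ 1 :=
  div_le_one_of_le₀
    (Finset.single_le_sum (f := fun k => pr k * exp (-‖x - μ k‖ ^ 2 / 2))
      (fun k _ => mul_nonneg (hpr k) (exp_pos _).le) (Finset.mem_univ l))
    (Finset.sum_nonneg fun k _ => mul_nonneg (hpr k) (exp_pos _).le)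

theorem respW_le_of_norm_sub (hpr : ∀ k, 0 ≤ pr k) {κ r R : ℝ} (hκ : 0 < κ) {k m : Fin M}
    (hk : κ ≤ pr k) (hm : pr m ≤ 1) {x : EuclideanSpace ℝ (Fin d)} (hr : ‖x - μ k‖ ≤ r)
    (hR0 : 0 ≤ R) (hR : R ≤ ‖x - μ m‖) :
    respW d M pr μ m x ≤ κ⁻¹ * exp (-(R ^ 2 - r ^ 2) / 2) := by
  have hden : κ * exp (-r ^ 2 / 2) ≤ ∑ l, pr l * exp (-‖x - μ l‖ ^ 2 / 2) :=
    calc κ * exp (-r ^ 2 / 2) ≤ pr k * exp (-‖x - μ k‖ ^ 2 / 2) := by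
          gcongr
          exact hpr k
      _ ≤ ∑ l, pr l * exp (-‖x - μ l‖ ^ 2 / 2) :=
          Finset.single_le_sum (f := fun l => pr l * exp (-‖x - μ l‖ ^ 2 / 2))
            (fun l _ => mul_nonneg (hpr l) (exp_pos _).le) (Finset.mem_univ k)
  have hnum : pr m * exp (-‖x - μ m‖ ^ 2 / 2) ≤ exp (-R ^ 2 / 2) :=
    calc pr m * exp (-‖x - μ m‖ ^ 2 / 2) ≤ 1 * exp (-R ^ 2 / 2) := by gcongr
      _ = exp (-R ^ 2 / 2) := one_mul _
  calc respW d M pr μ m x ≤ exp (-R ^ 2 / 2) / (κ * exp (-r ^ 2 / 2)) :=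
        div_le_div₀ (exp_pos _).le hnum (by positivity) hden
    _ = κ⁻¹ * exp (-(R ^ 2 - r ^ 2) / 2) := by
        rw [show -(R ^ 2 - r ^ 2) / 2 = -R ^ 2 / 2 - -r ^ 2 / 2 by ring, exp_sub]
        field_simp

end Responsibilities

section Envelope

variable {d : ℕ}

noncomputable def gaussianEnvelope (c K L : ℝ) (z : EuclideanSpace ℝ (Fin d)) : ℝ :=
  (‖z‖ + c) ^ 2 * (K * exp (-(1 / 2) * ‖z‖ ^ 2) + L * exp (-(1 / 4) * ‖z‖ ^ 2))

theorem integrable_gaussianEnvelope (hd : 0 < d) (c K L : ℝ) :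
    Integrable (gaussianEnvelope (d := d) c K L) := by
  have : Nontrivial (EuclideanSpace ℝ (Fin d)) :=
    Module.nontrivial_of_finrank_pos (R := ℝ) (by rwa [finrank_euclideanSpace_fin])
  have h (b : ℝ) (hb : 0 < b) := integrable_add_norm_sq_mul_exp_neg_mul_sq_norm
    (E := EuclideanSpace ℝ (Fin d)) volume c hb
  refine ((h (1 / 2) (by norm_num)).const_mul K).add ((h (1 / 4) (by norm_num)).const_mul L)
    |>.congr (.of_forall fun z => ?_)
  simp only [gaussianEnvelope, Pi.add_apply]
  ring

theorem integral_gaussianEnvelope_le (hd : 0 < d) {c K L : ℝ} (hc : 0 ≤ c) (hK : 0 ≤ K)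
    (hL : 0 ≤ L) :
    (2 * π) ^ (-(d : ℝ) / 2) * ∫ z, gaussianEnvelope (d := d) c K L z ≤
      (c + d) ^ 2 * (K + 4 * 2 ^ ((d : ℝ) / 2) * L) := by
  have : Nontrivial (EuclideanSpace ℝ (Fin d)) :=
    Module.nontrivial_of_finrank_pos (R := ℝ) (by rwa [finrank_euclideanSpace_fin])
  have hd1 : (1 : ℝ) ≤ d := by exact_mod_cast hd
  have hmoment (b : ℝ) (hb : 0 < b) (hbd : 2 * b ≤ d) :=
    integral_add_norm_sq_mul_exp_neg_mul_sq_norm_le (E := EuclideanSpace ℝ (Fin d)) volume hb hc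
      (by rwa [finrank_euclideanSpace_fin])
  have hgauss (b : ℝ) (hb : 0 < b) :=
    GaussianFourier.integral_rexp_neg_mul_sq_norm (V := EuclideanSpace ℝ (Fin d)) hb
  have hI (b : ℝ) (hb : 0 < b) := integrable_add_norm_sq_mul_exp_neg_mul_sq_norm
    (E := EuclideanSpace ℝ (Fin d)) volume c hb
  simp only [finrank_euclideanSpace_fin] at hmoment hgauss
  have hsplit : ∫ z, gaussianEnvelope (d := d) c K L z =
      K * (∫ z : EuclideanSpace ℝ (Fin d), (‖z‖ + c) ^ 2 * exp (-(1 / 2) * ‖z‖ ^ 2)) +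
        L * ∫ z : EuclideanSpace ℝ (Fin d), (‖z‖ + c) ^ 2 * exp (-(1 / 4) * ‖z‖ ^ 2) := by
    rw [← integral_const_mul, ← integral_const_mul, ← integral_add
      ((hI (1 / 2) (by norm_num)).const_mul K) ((hI (1 / 4) (by norm_num)).const_mul L)]
    congr 1 with z
    simp only [gaussianEnvelope]
    ring
  have h4π : (π / (1 / 4)) ^ ((d : ℝ) / 2) =
      2 ^ ((d : ℝ) / 2) * (π / (1 / 2)) ^ ((d : ℝ) / 2) := by
    rw [← mul_rpow (by norm_num) (by positivity)]
    ring_nf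
  have hnorm : (2 * π) ^ (-(d : ℝ) / 2) * (π / (1 / 2)) ^ ((d : ℝ) / 2) = 1 := by
    rw [show π / (1 / 2) = 2 * π by ring, neg_div, rpow_neg (by positivity),
      inv_mul_cancel₀ (by positivity)]
  calc (2 * π) ^ (-(d : ℝ) / 2) * ∫ z, gaussianEnvelope (d := d) c K L z
      ≤ (2 * π) ^ (-(d : ℝ) / 2) *
          (K * ((c + d / (2 * (1 / 2))) ^ 2 * (π / (1 / 2)) ^ ((d : ℝ) / 2)) +
            L * ((c + d / (2 * (1 / 4))) ^ 2 * (π / (1 / 4)) ^ ((d : ℝ) / 2))) := by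
        rw [hsplit, ← hgauss _ (by norm_num), ← hgauss (1 / 4) (by norm_num)]
        gcongr
        · exact hmoment _ (by norm_num) (by linarith)
        · exact hmoment _ (by norm_num) (by linarith)
    _ = K * (c + d) ^ 2 + 2 ^ ((d : ℝ) / 2) * L * (c + 2 * d) ^ 2 := by
        rw [h4π]
        linear_combination (K * (c + d / (2 * (1 / 2))) ^ 2 +
          L * (c + d / (2 * (1 / 4))) ^ 2 * 2 ^ ((d : ℝ) / 2)) * hnorm
    _ ≤ (c + d) ^ 2 * (K + 4 * 2 ^ ((d : ℝ) / 2) * L) := by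
        have : (c + 2 * d) ^ 2 ≤ 4 * (c + d) ^ 2 := by nlinarith
        nlinarith [mul_le_mul_of_nonneg_left this
          (by positivity : (0 : ℝ) ≤ 2 ^ ((d : ℝ) / 2) * L)]

end Envelope

section Separation

variable {d M : ℕ} {pr : Fin M → ℝ} {κ a Rmin Rmax : ℝ}
  {μ μstar : Fin M → EuclideanSpace ℝ (Fin d)}

theorem norm_sub_le_of_centers (hμ : ∀ l, ‖μ l - μstar l‖ ≤ a)
    (hRmax : ∀ i j, i ≠ j → ‖μstar i - μstar j‖ ≤ Rmax) (hRmax0 : 0 ≤ Rmax) (k l : Fin M)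
    (x : EuclideanSpace ℝ (Fin d)) : ‖x - μ l‖ ≤ ‖x - μstar k‖ + Rmax + a := by
  have hkl : ‖μstar k - μstar l‖ ≤ Rmax := by
    obtain rfl | hkl := eq_or_ne k l
    · simpa using hRmax0
    · exact hRmax k l hkl
  calc ‖x - μ l‖ ≤ ‖x - μstar l‖ + ‖μstar l - μ l‖ := norm_sub_le_norm_sub_add_norm_sub _ _ _
    _ ≤ ‖x - μstar k‖ + ‖μstar k - μstar l‖ + ‖μ l - μstar l‖ := by
        rw [norm_sub_rev (μstar l)]
        gcongr
        exact norm_sub_le_norm_sub_add_norm_sub _ _ _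
    _ ≤ ‖x - μstar k‖ + Rmax + a := by gcongr; exact hμ l

theorem respW_mul_respW_le_of_norm_sub_le (hpr : ∀ l, 0 ≤ pr l) (hpr1 : ∀ l, pr l ≤ 1)
    (hκ : 0 < κ) (hκmin : ∀ l, κ ≤ pr l) (hμ : ∀ l, ‖μ l - μstar l‖ ≤ a)
    (hRmin : ∀ i j, i ≠ j → Rmin ≤ ‖μstar i - μstar j‖) (ha : 0 ≤ a) (haR : a ≤ Rmin / 2)
    {i j k : Fin M} (hij : i ≠ j) {x : EuclideanSpace ℝ (Fin d)}
    (hx : ‖x - μstar k‖ ≤ (Rmin / 2 - a) / 2) :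
    respW d M pr μ i x * respW d M pr μ j x ≤ κ⁻¹ * exp (-(Rmin * (Rmin / 2 - a)) / 2) := by
  obtain ⟨m, hmk, hm⟩ : ∃ m, m ≠ k ∧
      respW d M pr μ i x * respW d M pr μ j x ≤ respW d M pr μ m x := by
    obtain rfl | hik := eq_or_ne i k
    · exact ⟨j, hij.symm, mul_le_of_le_one_left (respW_nonneg hpr j x) (respW_le_one hpr i x)⟩
    · exact ⟨i, hik, mul_le_of_le_one_right (respW_nonneg hpr i x) (respW_le_one hpr j x)⟩
  have hxk : ‖x - μ k‖ ≤ ‖x - μstar k‖ + a :=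
    (norm_sub_le_norm_sub_add_norm_sub _ (μstar k) _).trans
      (by rw [norm_sub_rev (μstar k)]; gcongr; exact hμ k)
  have hxm : Rmin - a - ‖x - μstar k‖ ≤ ‖x - μ m‖ := by
    have h1 := (hRmin m k hmk).trans (norm_sub_le_norm_sub_add_norm_sub _ (μ m) _)
    have h2 := norm_sub_le_norm_sub_add_norm_sub (μ m) x (μstar k)
    linarith [hμ m, norm_sub_rev (μstar m) (μ m), norm_sub_rev (μ m) x]
  calc respW d M pr μ i x * respW d M pr μ j x ≤ respW d M pr μ m x := hm
    _ ≤ κ⁻¹ * exp (-((Rmin - a - ‖x - μstar k‖) ^ 2 - (‖x - μstar k‖ + a) ^ 2) / 2) :=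
        respW_le_of_norm_sub hpr hκ (hκmin k) (hpr1 m) hxk (by linarith) hxm
    _ ≤ κ⁻¹ * exp (-(Rmin * (Rmin / 2 - a)) / 2) := by
        gcongr
        nlinarith [norm_nonneg (x - μstar k)]

theorem respW_mul_respW_mul_exp_le (hpr : ∀ l, 0 ≤ pr l) (hpr1 : ∀ l, pr l ≤ 1)
    (hκ : 0 < κ) (hκmin : ∀ l, κ ≤ pr l) (hμ : ∀ l, ‖μ l - μstar l‖ ≤ a)
    (hRmin : ∀ i j, i ≠ j → Rmin ≤ ‖μstar i - μstar j‖) (ha : 0 ≤ a) (haR : a ≤ Rmin / 2)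
    {i j : Fin M} (hij : i ≠ j) (k : Fin M) (x : EuclideanSpace ℝ (Fin d)) :
    respW d M pr μ i x * respW d M pr μ j x * exp (-‖x - μstar k‖ ^ 2 / 2) ≤
      κ⁻¹ * exp (-(Rmin * (Rmin / 2 - a)) / 2) * exp (-(1 / 2) * ‖x - μstar k‖ ^ 2) +
        exp (-(Rmin / 2 - a) ^ 2 / 16) * exp (-(1 / 4) * ‖x - μstar k‖ ^ 2) := by
  set u := ‖x - μstar k‖
  rw [show -u ^ 2 / 2 = -(1 / 2) * u ^ 2 by ring]
  rcases le_or_gt u ((Rmin / 2 - a) / 2) with hnear | hfar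
  · have hw := respW_mul_respW_le_of_norm_sub_le hpr hpr1 hκ hκmin hμ hRmin ha haR hij hnear
    calc respW d M pr μ i x * respW d M pr μ j x * exp (-(1 / 2) * u ^ 2)
        ≤ κ⁻¹ * exp (-(Rmin * (Rmin / 2 - a)) / 2) * exp (-(1 / 2) * u ^ 2) := by gcongr
      _ ≤ _ := le_add_of_nonneg_right (by positivity)
  · have hw := mul_le_one₀ (respW_le_one (μ := μ) hpr i x) (respW_nonneg (μ := μ) hpr j x)
      (respW_le_one hpr j x)
    calc respW d M pr μ i x * respW d M pr μ j x * exp (-(1 / 2) * u ^ 2)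
        ≤ exp (-(1 / 2) * u ^ 2) := mul_le_of_le_one_left (exp_pos _).le hw
      _ ≤ exp (-(Rmin / 2 - a) ^ 2 / 16) * exp (-(1 / 4) * u ^ 2) := by
        rw [← exp_add]
        gcongr
        nlinarith
      _ ≤ _ := le_add_of_nonneg_left (by positivity)

theorem integrand_mul_exp_le_gaussianEnvelope (hpr : ∀ l, 0 ≤ pr l) (hpr1 : ∀ l, pr l ≤ 1)
    (hκ : 0 < κ) (hκmin : ∀ l, κ ≤ pr l) (hμ : ∀ l, ‖μ l - μstar l‖ ≤ a)
    (hRmin : ∀ i j, i ≠ j → Rmin ≤ ‖μstar i - μstar j‖)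
    (hRmax : ∀ i j, i ≠ j → ‖μstar i - μstar j‖ ≤ Rmax) (ha : 0 ≤ a) (haR : a ≤ Rmin / 2)
    (hRR : Rmin ≤ Rmax) {i j : Fin M} (hij : i ≠ j) (k : Fin M)
    (x : EuclideanSpace ℝ (Fin d)) :
    respW d M pr μ i x * respW d M pr μ j x * ‖x - μ i‖ * ‖x - μ j‖ *
        exp (-‖x - μstar k‖ ^ 2 / 2) ≤
      gaussianEnvelope (3 / 2 * Rmax) (κ⁻¹ * exp (-(Rmin * (Rmin / 2 - a)) / 2))
        (exp (-(Rmin / 2 - a) ^ 2 / 16)) (x - μstar k) := by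
  have hn (l : Fin M) : ‖x - μ l‖ ≤ ‖x - μstar k‖ + 3 / 2 * Rmax :=
    (norm_sub_le_of_centers hμ hRmax (by linarith) k l x).trans (by linarith)
  have hw := respW_mul_respW_mul_exp_le hpr hpr1 hκ hκmin hμ hRmin ha haR hij k x
  calc respW d M pr μ i x * respW d M pr μ j x * ‖x - μ i‖ * ‖x - μ j‖ *
        exp (-‖x - μstar k‖ ^ 2 / 2)
      = respW d M pr μ i x * respW d M pr μ j x * exp (-‖x - μstar k‖ ^ 2 / 2) *
          (‖x - μ i‖ * ‖x - μ j‖) := by ring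
    _ ≤ (κ⁻¹ * exp (-(Rmin * (Rmin / 2 - a)) / 2) * exp (-(1 / 2) * ‖x - μstar k‖ ^ 2) +
          exp (-(Rmin / 2 - a) ^ 2 / 16) * exp (-(1 / 4) * ‖x - μstar k‖ ^ 2)) *
          ((‖x - μstar k‖ + 3 / 2 * Rmax) * (‖x - μstar k‖ + 3 / 2 * Rmax)) :=
        mul_le_mul hw (mul_le_mul (hn i) (hn j) (norm_nonneg _) ((norm_nonneg _).trans (hn i)))
          (by positivity) (by positivity)
    _ = _ := by rw [gaussianEnvelope]; ring

end Separation

theorem integral_mul_mixDensity_le {d M : ℕ} {pr : Fin M → ℝ}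
    {μ : Fin M → EuclideanSpace ℝ (Fin d)} {F g : EuclideanSpace ℝ (Fin d) → ℝ}
    (hpr : ∀ k, 0 ≤ pr k) (hsum : ∑ k, pr k = 1) (hF0 : ∀ x, 0 ≤ F x) (hg : Integrable g)
    (hFg : ∀ k x, F x * exp (-‖x - μ k‖ ^ 2 / 2) ≤ g (x - μ k)) :
    ∫ x, F x * mixDensity d M pr μ x ≤ (2 * π) ^ (-(d : ℝ) / 2) * ∫ z, g z := by
  set C : ℝ := (2 * π) ^ (-(d : ℝ) / 2)
  have hC : 0 ≤ C := by positivity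
  have hdom (x : EuclideanSpace ℝ (Fin d)) :
      F x * mixDensity d M pr μ x ≤ ∑ k, pr k * (C * g (x - μ k)) := by
    simp only [mixDensity, stdGaussDensity, Finset.mul_sum]
    refine Finset.sum_le_sum fun k _ => ?_
    calc F x * (pr k * (C * exp (-‖x - μ k‖ ^ 2 / 2)))
        = pr k * (C * (F x * exp (-‖x - μ k‖ ^ 2 / 2))) := by ring
      _ ≤ pr k * (C * g (x - μ k)) := by gcongr; exacts [hpr k, hFg k x]
  have hmix (x : EuclideanSpace ℝ (Fin d)) : 0 ≤ mixDensity d M pr μ x :=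
    Finset.sum_nonneg fun k _ => mul_nonneg (hpr k) (by unfold stdGaussDensity; positivity)
  have hgk (k : Fin M) : Integrable fun x => pr k * (C * g (x - μ k)) :=
    ((hg.comp_sub_right (μ k)).const_mul C).const_mul (pr k)
  calc ∫ x, F x * mixDensity d M pr μ x ≤ ∫ x, ∑ k, pr k * (C * g (x - μ k)) :=
        integral_mono_of_nonneg (.of_forall fun x => mul_nonneg (hF0 x) (hmix x))
          (integrable_finsetSum _ fun k _ => hgk k) (.of_forall hdom)
    _ = C * ∫ z, g z := by
        simp only [integral_finsetSum _ fun k _ => hgk k, integral_const_mul,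
          integral_sub_right_eq_self, ← Finset.sum_mul, hsum, one_mul]

theorem four_mul_two_rpow_mul_exp_le {d : ℕ} (hd : 0 < d) {D : ℝ} (hD : 8 * √d ≤ D) :
    4 * 2 ^ ((d : ℝ) / 2) * exp (-D ^ 2 / 16) ≤ exp (-D * √d / 8) := by
  have hs : 1 ≤ √d := one_le_sqrt.2 (by exact_mod_cast hd)
  have hds : (d : ℝ) = √d ^ 2 := (sq_sqrt (Nat.cast_nonneg d)).symm
  have he : 2 ≤ exp 1 := by linarith [add_one_le_exp 1]
  have h4 : 4 ≤ exp 2 := by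
    rw [show (2 : ℝ) = 1 + 1 by norm_num, exp_add]
    nlinarith
  have h2 : (2 : ℝ) ^ ((d : ℝ) / 2) ≤ exp ((d : ℝ) / 2) := by
    rw [← exp_one_rpow]
    gcongr
  calc 4 * 2 ^ ((d : ℝ) / 2) * exp (-D ^ 2 / 16)
      ≤ exp 2 * exp ((d : ℝ) / 2) * exp (-D ^ 2 / 16) := by gcongr
    _ = exp (2 + (d : ℝ) / 2 - D ^ 2 / 16) := by rw [← exp_add, ← exp_add]; ring_nf
    _ ≤ exp (-D * √d / 8) := by
        gcongr
        nlinarith [mul_le_mul hD hD (by positivity) (by linarith)]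

theorem inv_mul_exp_add_four_mul_two_rpow_mul_exp_le {d : ℕ} (hd : 0 < d) {κ R D : ℝ}
    (hκ : 2 ≤ κ⁻¹) (hD : 8 * √d ≤ D) (hRD : 2 * D ≤ R) :
    κ⁻¹ * exp (-(R * D) / 2) + 4 * 2 ^ ((d : ℝ) / 2) * exp (-D ^ 2 / 16) ≤
      (2 - κ) / κ * exp (-D * √d / 8) := by
  have hD0 : 0 ≤ D := (by positivity : (0 : ℝ) ≤ 8 * √d).trans hD
  have hexp : exp (-(R * D) / 2) ≤ exp (-D * √d / 8) := exp_le_exp.2 <| by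
    nlinarith [mul_le_mul_of_nonneg_left hRD hD0, mul_le_mul_of_nonneg_left hD hD0]
  have hκ0 : 0 < κ := inv_pos.1 (two_pos.trans_le hκ)
  rw [show (2 - κ) / κ = κ⁻¹ + 1 + (κ⁻¹ - 2) by field_simp; ring]
  nlinarith [four_mul_two_rpow_mul_exp_le hd hD, exp_pos (-D * √d / 8),
    mul_le_mul_of_nonneg_left hexp (inv_pos.2 hκ0).le]

theorem two_le_inv_of_le_of_sum_eq_one {ι : Type*} [Fintype ι] {p : ι → ℝ} {κ : ℝ}
    (hp : ∀ k, 0 ≤ p k) (hsum : ∑ k, p k = 1) (hκ : 0 < κ) {i j : ι} (hij : i ≠ j)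
    (hi : κ ≤ p i) (hj : κ ≤ p j) : 2 ≤ κ⁻¹ := by
  classical
  have := Finset.sum_pair (f := p) hij ▸ hsum ▸
    Finset.sum_le_sum_of_subset_of_nonneg (Finset.subset_univ {i, j}) fun k _ _ => hp k
  rw [le_inv_comm₀ two_pos hκ]
  linarith

theorem eight_mul_le_sub_of_le_sub_mul_max {a b s x : ℝ} (hs : 0 ≤ s)
    (ha : a ≤ b - s * max x (8 * √3)) : 8 * s ≤ b - a := by
  have h8 : 8 ≤ max x (8 * √3) :=
    le_max_of_le_right (by nlinarith [one_le_sqrt.2 (by norm_num : (1 : ℝ) ≤ 3)])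
  linarith [mul_le_mul_of_nonneg_left h8 hs]

theorem stmt_14_general (d M : ℕ) (pr : Fin M → ℝ)
    (hsum : ∑ i, pr i = 1)
    (κ : ℝ) (hκ : 0 < κ) (hκmin : ∀ i, κ ≤ pr i)
    (μstar : Fin M → EuclideanSpace ℝ (Fin d))
    (Rmin Rmax : ℝ)
    (hRmin : ∀ i j, i ≠ j → Rmin ≤ ‖μstar i - μstar j‖)
    (hRmax : ∀ i j, i ≠ j → ‖μstar i - μstar j‖ ≤ Rmax)
    (a : ℝ)
    (ha : a ≤ Rmin / 2 - Real.sqrt d *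
        max (4 * Real.sqrt (2 * max (Real.log (Rmin / 4)) 0)) (8 * Real.sqrt 3)) :
    ∀ μ : Fin M → EuclideanSpace ℝ (Fin d), (∀ i, ‖μ i - μstar i‖ ≤ a) →
      ∀ i j, i ≠ j →
        ∫ x, respW d M pr μ i x * respW d M pr μ j x * ‖x - μ i‖ * ‖x - μ j‖ *
            mixDensity d M pr μstar x ≤
          (2 - κ) / κ * ((3 / 2) * Rmax + d) ^ 2 *
            Real.exp (-(Rmin / 2 - a) * Real.sqrt d / 8) := by
  intro μ hμ i j hij
  have hpr (k : Fin M) : 0 ≤ pr k := hκ.le.trans (hκmin k)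
  have hpr1 (k : Fin M) : pr k ≤ 1 :=
    hsum ▸ Finset.single_le_sum (fun l _ => hpr l) (Finset.mem_univ k)
  have hκ2 := two_le_inv_of_le_of_sum_eq_one hpr hsum hκ hij (hκmin i) (hκmin j)
  obtain rfl | hd := Nat.eq_zero_or_pos d
  · have hzero (x : EuclideanSpace ℝ (Fin 0)) : ‖x‖ = 0 := by
      rw [Subsingleton.elim x 0, norm_zero]
    simp only [hzero, mul_zero, zero_mul, integral_zero]
    have : 0 ≤ (2 - κ) / κ := div_nonneg (by linarith [hκmin i, hpr1 i]) hκ.le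
    positivity
  set D := Rmin / 2 - a with hD_def
  have hD : 8 * √d ≤ D := eight_mul_le_sub_of_le_sub_mul_max (sqrt_nonneg d) ha
  have ha0 : 0 ≤ a := (norm_nonneg _).trans (hμ i)
  have hRR : Rmin ≤ Rmax := (hRmin i j hij).trans (hRmax i j hij)
  have hF0 (x : EuclideanSpace ℝ (Fin d)) :
      0 ≤ respW d M pr μ i x * respW d M pr μ j x * ‖x - μ i‖ * ‖x - μ j‖ := by
    have := respW_nonneg (μ := μ) hpr
    exact mul_nonneg (mul_nonneg (mul_nonneg (this i x) (this j x)) (norm_nonneg _))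
      (norm_nonneg _)
  calc _ ≤ (2 * π) ^ (-(d : ℝ) / 2) * ∫ z, gaussianEnvelope (3 / 2 * Rmax)
          (κ⁻¹ * exp (-(Rmin * D) / 2)) (exp (-D ^ 2 / 16)) z :=
        integral_mul_mixDensity_le hpr hsum hF0 (integrable_gaussianEnvelope hd _ _ _)
          (integrand_mul_exp_le_gaussianEnvelope hpr hpr1 hκ hκmin hμ hRmin hRmax ha0
            (by linarith [sqrt_nonneg d]) hRR hij)
    _ ≤ (3 / 2 * Rmax + d) ^ 2 * (κ⁻¹ * exp (-(Rmin * D) / 2) +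
          4 * 2 ^ ((d : ℝ) / 2) * exp (-D ^ 2 / 16)) :=
        integral_gaussianEnvelope_le hd (by linarith [sqrt_nonneg d]) (by positivity)
          (by positivity)
    _ ≤ (3 / 2 * Rmax + d) ^ 2 * ((2 - κ) / κ * exp (-D * √d / 8)) := by
        gcongr
        exact inv_mul_exp_add_four_mul_two_rpow_mul_exp_le hd hκ2 hD (by linarith)
    _ = _ := by ring

/-- Second inequality of Lemma A.1: for `i ≠ j`,
`E[w_i w_j ‖X−μ_i‖‖X−μ_j‖] ≤ ((2−κ)/κ)((3/2)R_max + d)² exp(−(R_min/2 − a)√d/8)`. -/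
theorem stmt_14 (d M : ℕ) (hM : 0 < M) (pr : Fin M → ℝ)
    (hpr : ∀ i, 0 < pr i) (hsum : ∑ i, pr i = 1)
    (κ : ℝ) (hκ : 0 < κ) (hκmin : ∀ i, κ ≤ pr i)
    (μstar : Fin M → EuclideanSpace ℝ (Fin d))
    (Rmin Rmax : ℝ)
    (hRmin : ∀ i j, i ≠ j → Rmin ≤ ‖μstar i - μstar j‖)
    (hRmax : ∀ i j, i ≠ j → ‖μstar i - μstar j‖ ≤ Rmax)
    (hsep : 30 * Real.sqrt d ≤ Rmin)
    (a : ℝ)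
    (ha : a ≤ Rmin / 2 - Real.sqrt d *
        max (4 * Real.sqrt (2 * max (Real.log (Rmin / 4)) 0)) (8 * Real.sqrt 3)) :
    ∀ μ : Fin M → EuclideanSpace ℝ (Fin d), (∀ i, ‖μ i - μstar i‖ ≤ a) →
      ∀ i j, i ≠ j →
        ∫ x, respW d M pr μ i x * respW d M pr μ j x * ‖x - μ i‖ * ‖x - μ j‖ *
            mixDensity d M pr μstar x ≤
          (2 - κ) / κ * ((3 / 2) * Rmax + d) ^ 2 *
            Real.exp (-(Rmin / 2 - a) * Real.sqrt d / 8) :=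
  stmt_14_general d M pr hsum κ hκ hκmin μstar Rmin Rmax hRmin hRmax a ha
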